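/- arXiv:gr-qc/0505071 — 4 statements merged into one kernel-verified Lean document; each statement's English description precedes it below -/
import Mathlib

section
/- Let n ≥ 1 and μ₁,…,μₙ ∈ ℝ. Let ṽ₁,…,ṽₙ : ℝ → SO⁺(2,1) and x̃₁,…,x̃ₙ : ℝ → ℝ³ be differentiable one-parameter families. Define ũᵢ(ε) = ṽᵢ(ε)·exp(−μᵢM(e₀))·ṽᵢ(ε)⁻¹, j̃ᵢ(ε) = (1 − ũᵢ(ε)⁻¹)·x̃ᵢ(ε), and the ordered products Uᵢ = ũᵢ·ũᵢ₋₁···ũ₁ with U₀ = 1. Then at every parameter value ε one has Σᵢ₌₁ⁿ η( m( U′ᵢ₋₁Uᵢ₋₁⁻¹ − ṽ′ᵢṽᵢ⁻¹ ), j̃ᵢ ) = Σᵢ₌₁ⁿ η( m( U′ᵢ₋₁Uᵢ₋₁⁻¹ − U′ᵢUᵢ⁻¹ ), x̃ᵢ ), where primes denote derivatives with respect to ε. (Part 1 of Lemma 6.1: for genus 0 and n spinless particles the symplectic potential one-form Θ takes the form (6.4) in the variables ũ_{Mᵢ}, x̃_{Mᵢ}.) -/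
/-!
Write `Aᵢ = U′ᵢUᵢ⁻¹` and `Bᵢ = ṽ′ᵢṽᵢ⁻¹`; the two sums agree term by term. As `ũᵢ = ṽᵢ c ṽᵢ⁻¹`
with `c` constant, `ũ′ᵢũᵢ⁻¹ = Bᵢ − ũᵢBᵢũᵢ⁻¹`, and the product rule for `Uᵢ₊₁ = ũᵢUᵢ` gives
`Aᵢ₊₁ = ũ′ᵢũᵢ⁻¹ + ũᵢAᵢũᵢ⁻¹`, so `Aᵢ − Aᵢ₊₁ = X − ũᵢXũᵢ⁻¹` with `X = Aᵢ − Bᵢ`. Logarithmic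
derivatives of `SO(2,1)`-valued curves lie in `so(2,1)`, where conjugation by `ũ ∈ SO(2,1)` is
`M ∘ ũ ∘ m`; as `ũ` preserves `η`, `η(m(ũXũ⁻¹), x) = η(mX, ũ⁻¹x)`, hence
`η(m(X − ũXũ⁻¹), x) = η(mX, (1 − ũ⁻¹)x) = η(mX, j)`.
-/

open Matrix

noncomputable section

attribute [local instance] Matrix.normedAddCommGroup Matrix.normedSpace

/-- The Minkowski metric matrix diag(1,-1,-1). -/
def η3 : Matrix (Fin 3) (Fin 3) ℝ := Matrix.diagonal ![1, -1, -1]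

/-- The Minkowski bilinear form on ℝ³. -/
def mink (x y : Fin 3 → ℝ) : ℝ := x 0 * y 0 - x 1 * y 1 - x 2 * y 2

/-- The Minkowski cross product. -/
def crossM (p q : Fin 3 → ℝ) : Fin 3 → ℝ :=
  ![p 1 * q 2 - p 2 * q 1, p 0 * q 2 - p 2 * q 0, p 1 * q 0 - p 0 * q 1]

/-- The map M : ℝ³ → so(2,1), M(p)q = p ×_η q. -/
def Mmap (p : Fin 3 → ℝ) : Matrix (Fin 3) (Fin 3) ℝ :=
  !![0, -(p 2), p 1; -(p 2), 0, p 0; p 1, -(p 0), 0]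

/-- The inverse m : so(2,1) → ℝ³ of M (extracted entrywise). -/
def mser (X : Matrix (Fin 3) (Fin 3) ℝ) : Fin 3 → ℝ := ![X 1 2, X 0 2, -(X 0 1)]

/-- Membership in SO⁺(2,1). -/
def IsSOplus (v : Matrix (Fin 3) (Fin 3) ℝ) : Prop :=
  vᵀ * η3 * v = η3 ∧ v.det = 1 ∧ 0 < v 0 0

/-- so(2,1) as a set of 3×3 matrices. -/
def IsSO21 (X : Matrix (Fin 3) (Fin 3) ℝ) : Prop := Xᵀ * η3 + η3 * X = 0

/-- The 4×4 Poincaré matrix [[v,x],[0,1]]. -/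
def pmat (v : Matrix (Fin 3) (Fin 3) ℝ) (x : Fin 3 → ℝ) : Matrix (Fin 4) (Fin 4) ℝ :=
  Matrix.of fun i j =>
    if hi : (i : ℕ) < 3 then
      if hj : (j : ℕ) < 3 then v ⟨i, hi⟩ ⟨j, hj⟩ else x ⟨i, hi⟩
    else if (j : ℕ) < 3 then 0 else 1

/-- The 4×4 iso(2,1) matrix [[X,b],[0,0]]. -/
def amat (X : Matrix (Fin 3) (Fin 3) ℝ) (b : Fin 3 → ℝ) : Matrix (Fin 4) (Fin 4) ℝ :=
  Matrix.of fun i j =>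
    if hi : (i : ℕ) < 3 then
      if hj : (j : ℕ) < 3 then X ⟨i, hi⟩ ⟨j, hj⟩ else b ⟨i, hi⟩
    else 0

/-- Membership in the Poincaré group ISO⁺(2,1) ⊂ GL₄(ℝ). -/
def IsISO (g : Matrix (Fin 4) (Fin 4) ℝ) : Prop :=
  ∃ v x, IsSOplus v ∧ g = pmat v x

/-- Membership in the Lie algebra iso(2,1). -/
def IsISOAlg (ξ : Matrix (Fin 4) (Fin 4) ℝ) : Prop :=
  ∃ X b, IsSO21 X ∧ ξ = amat X b

/-- Standard basis vectors of ℝ³. -/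
def e3 (a : Fin 3) : Fin 3 → ℝ := Pi.single a 1

/-- The rotation/boost generators Ĵ_a of iso(2,1). -/
def Jhat (a : Fin 3) : Matrix (Fin 4) (Fin 4) ℝ := amat (Mmap (e3 a)) 0

/-- The translation generators P̂_a of iso(2,1). -/
def Phat (a : Fin 3) : Matrix (Fin 4) (Fin 4) ℝ := amat 0 (e3 a)

/-- The invariant pairing ⟨[[X,b],0],[[Y,c],0]⟩ = η(m X, c) + η(m Y, b) on iso(2,1). -/
def pairIso (ξ ζ : Matrix (Fin 4) (Fin 4) ℝ) : ℝ :=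
  mink ![ξ 1 2, ξ 0 2, -(ξ 0 1)] ![ζ 0 3, ζ 1 3, ζ 2 3]
  + mink ![ζ 1 2, ζ 0 2, -(ζ 0 1)] ![ξ 0 3, ξ 1 3, ξ 2 3]

/-- Ordered product U_k(ε) = u_{k-1}(ε)⋯u_0(ε) (with U_0 = 1). -/
def ordProd {n : ℕ} (u : ℕ → ℝ → Matrix (Fin n) (Fin n) ℝ) : ℕ → ℝ → Matrix (Fin n) (Fin n) ℝ
  | 0 => fun _ => 1
  | k + 1 => fun ε => u k ε * ordProd u k ε

section MatrixCalculus

variable {l m n : Type*} [Fintype m] [Fintype n]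

theorem HasDerivAt.matrix_transpose {f : ℝ → Matrix m n ℝ} {f' : Matrix m n ℝ} {t : ℝ}
    (hf : HasDerivAt f f' t) : HasDerivAt (fun s => (f s)ᵀ) (f')ᵀ t :=
  hasDerivAt_pi.mpr fun i => hasDerivAt_pi.mpr fun k =>
    hasDerivAt_pi.mp (hasDerivAt_pi.mp hf k) i

theorem HasDerivAt.matrix_mul {f : ℝ → Matrix l m ℝ} {g : ℝ → Matrix m n ℝ}
    {f' : Matrix l m ℝ} {g' : Matrix m n ℝ} {t : ℝ}
    (hf : HasDerivAt f f' t) (hg : HasDerivAt g g' t) :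
    HasDerivAt (fun s => f s * g s) (f' * g t + f t * g') t := by
  refine hasDerivAt_pi.mpr fun i => hasDerivAt_pi.mpr fun k => ?_
  simp only [Matrix.mul_apply, Matrix.add_apply, ← Finset.sum_add_distrib]
  exact HasDerivAt.fun_sum fun r _ =>
    (hasDerivAt_pi.mp (hasDerivAt_pi.mp hf i) r).mul (hasDerivAt_pi.mp (hasDerivAt_pi.mp hg r) k)

variable [Fintype l]

theorem DifferentiableAt.matrix_mul {f : ℝ → Matrix l m ℝ} {g : ℝ → Matrix m n ℝ} {t : ℝ}
    (hf : DifferentiableAt ℝ f t) (hg : DifferentiableAt ℝ g t) :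
    DifferentiableAt ℝ (fun s => f s * g s) t :=
  (hf.hasDerivAt.matrix_mul hg.hasDerivAt).differentiableAt

theorem deriv_matrix_mul {f : ℝ → Matrix l m ℝ} {g : ℝ → Matrix m n ℝ} {t : ℝ}
    (hf : DifferentiableAt ℝ f t) (hg : DifferentiableAt ℝ g t) :
    deriv (fun s => f s * g s) t = deriv f t * g t + f t * deriv g t :=
  (hf.hasDerivAt.matrix_mul hg.hasDerivAt).deriv

variable [DecidableEq n]

def matLogDeriv (f : ℝ → Matrix n n ℝ) (t : ℝ) : Matrix n n ℝ := deriv f t * (f t)⁻¹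

theorem matLogDeriv_mul {f g : ℝ → Matrix n n ℝ} {t : ℝ} (hf : DifferentiableAt ℝ f t)
    (hg : DifferentiableAt ℝ g t) (hgt : IsUnit (g t).det) :
    matLogDeriv (fun s => f s * g s) t = matLogDeriv f t + f t * matLogDeriv g t * (f t)⁻¹ := by
  simp only [matLogDeriv]
  rw [deriv_matrix_mul hf hg, Matrix.mul_inv_rev, Matrix.add_mul,
    Matrix.mul_assoc, ← Matrix.mul_assoc (g t), Matrix.mul_nonsing_inv _ hgt, Matrix.one_mul]
  simp only [Matrix.mul_assoc]

theorem matLogDeriv_mul_const {f : ℝ → Matrix n n ℝ} {c : Matrix n n ℝ} {t : ℝ}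
    (hf : DifferentiableAt ℝ f t) (hc : IsUnit c.det) :
    matLogDeriv (fun s => f s * c) t = matLogDeriv f t := by
  have hc' : deriv (fun _ => c) t = 0 := (hasDerivAt_const t c).deriv
  rw [matLogDeriv_mul hf (differentiableAt_const c) hc]
  simp [matLogDeriv, hc']

theorem matLogDeriv_conj_const {v : ℝ → Matrix n n ℝ} {c : Matrix n n ℝ} {t : ℝ}
    (hv : DifferentiableAt ℝ v t) (hv_inv : DifferentiableAt ℝ (fun s => (v s)⁻¹) t)
    (hv_det : ∀ s, IsUnit (v s).det) (hc : IsUnit c.det) :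
    matLogDeriv (fun s => v s * c * (v s)⁻¹) t =
      matLogDeriv v t - v t * c * (v t)⁻¹ * matLogDeriv v t * (v t * c * (v t)⁻¹)⁻¹ := by
  have hu : DifferentiableAt ℝ (fun s => v s * c * (v s)⁻¹) t :=
    (hv.matrix_mul (differentiableAt_const c)).matrix_mul hv_inv
  have hcomm : (fun s => v s * c * (v s)⁻¹ * v s) = fun s => v s * c := by
    funext s
    rw [Matrix.mul_assoc, Matrix.nonsing_inv_mul _ (hv_det s), Matrix.mul_one]
  have key := matLogDeriv_mul hu hv (hv_det t)
  rw [hcomm, matLogDeriv_mul_const hv hc] at key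
  exact eq_sub_of_add_eq key.symm

theorem matLogDeriv_transpose_mul_add {f : ℝ → Matrix n n ℝ} {J : Matrix n n ℝ} {t : ℝ}
    (hJ : ∀ s, (f s)ᵀ * J * f s = J) (hf : DifferentiableAt ℝ f t) (hft : IsUnit (f t).det) :
    (matLogDeriv f t)ᵀ * J + J * matLogDeriv f t = 0 := by
  -- Restated so that `deriv` carries the same instances as in `matLogDeriv`.
  have hf' : HasDerivAt f (deriv f t) t := hf.hasDerivAt
  have hderiv : (deriv f t)ᵀ * J * f t + (f t)ᵀ * J * deriv f t = 0 := by
    have h := (hf'.matrix_transpose.matrix_mul (hasDerivAt_const t J)).matrix_mul hf'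
    rw [funext hJ] at h
    have h0 : HasDerivAt (fun _ => J) (0 : Matrix n n ℝ) t := hasDerivAt_const t J
    simpa using h.unique h0
  have hinvT : ((f t)⁻¹)ᵀ * (f t)ᵀ = 1 := by
    rw [← Matrix.transpose_mul, Matrix.mul_nonsing_inv _ hft, Matrix.transpose_one]
  calc (matLogDeriv f t)ᵀ * J + J * matLogDeriv f t
      = ((f t)⁻¹)ᵀ * ((deriv f t)ᵀ * J * f t + (f t)ᵀ * J * deriv f t) * (f t)⁻¹ := by
        rw [matLogDeriv, Matrix.transpose_mul, Matrix.mul_add, Matrix.add_mul]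
        congr 1
        · simp only [Matrix.mul_assoc, Matrix.mul_nonsing_inv _ hft, Matrix.mul_one]
        · simp only [← Matrix.mul_assoc, hinvT, Matrix.one_mul]
    _ = 0 := by rw [hderiv, Matrix.mul_zero, Matrix.zero_mul]

end MatrixCalculus

section Lorentz

theorem η3_mul_η3 : η3 * η3 = 1 := by
  rw [η3, Matrix.diagonal_mul_diagonal, ← Matrix.diagonal_one]
  congr 1
  ext i; fin_cases i <;> simp

theorem η3_transpose : η3ᵀ = η3 := Matrix.diagonal_transpose _

theorem det_η3 : η3.det = 1 := by simp [η3, Fin.prod_univ_three]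

theorem isUnit_η3 : IsUnit η3 := (Matrix.isUnit_iff_isUnit_det _).mpr (det_η3 ▸ isUnit_one)

theorem η3_inv : η3⁻¹ = η3 := Matrix.inv_eq_left_inv η3_mul_η3

def IsSpecialLorentz (A : Matrix (Fin 3) (Fin 3) ℝ) : Prop := Aᵀ * η3 * A = η3 ∧ A.det = 1

namespace IsSpecialLorentz

variable {A B : Matrix (Fin 3) (Fin 3) ℝ}

theorem isUnit_det (h : IsSpecialLorentz A) : IsUnit A.det := h.2 ▸ isUnit_one

theorem inv_eq (h : IsSpecialLorentz A) : A⁻¹ = η3 * Aᵀ * η3 :=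
  Matrix.inv_eq_left_inv <| by
    rw [Matrix.mul_assoc, Matrix.mul_assoc, ← Matrix.mul_assoc Aᵀ, h.1, η3_mul_η3]

theorem one : IsSpecialLorentz 1 := ⟨by simp, Matrix.det_one⟩

theorem mul (hA : IsSpecialLorentz A) (hB : IsSpecialLorentz B) : IsSpecialLorentz (A * B) := by
  refine ⟨?_, by rw [Matrix.det_mul, hA.2, hB.2, one_mul]⟩
  calc (A * B)ᵀ * η3 * (A * B) = Bᵀ * (Aᵀ * η3 * A) * B := by
        rw [Matrix.transpose_mul]; noncomm_ring
    _ = η3 := by rw [hA.1, hB.1]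

theorem inv (h : IsSpecialLorentz A) : IsSpecialLorentz A⁻¹ := by
  refine ⟨?_, by rw [Matrix.det_nonsing_inv, h.2, Ring.inverse_one]⟩
  have hAA : A * A⁻¹ = 1 := Matrix.mul_nonsing_inv _ h.isUnit_det
  calc A⁻¹ᵀ * η3 * A⁻¹ = A⁻¹ᵀ * (Aᵀ * η3 * A) * A⁻¹ := by rw [h.1]
    _ = (A * A⁻¹)ᵀ * η3 * (A * A⁻¹) := by rw [Matrix.transpose_mul]; noncomm_ring
    _ = η3 := by rw [hAA]; simp

end IsSpecialLorentz

theorem IsSO21.isSpecialLorentz_exp {X : Matrix (Fin 3) (Fin 3) ℝ} (hX : IsSO21 X) :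
    IsSpecialLorentz (NormedSpace.exp X) := by
  have hXT : Xᵀ = η3 * -X * η3⁻¹ := by
    have h : Xᵀ * η3 = -(η3 * X) := eq_neg_of_add_eq_zero_left hX
    calc Xᵀ = Xᵀ * η3 * η3 := by rw [Matrix.mul_assoc, η3_mul_η3, Matrix.mul_one]
      _ = η3 * -X * η3⁻¹ := by rw [h, η3_inv]; noncomm_ring
  have hexpT : (NormedSpace.exp X)ᵀ = η3 * NormedSpace.exp (-X) * η3 := by
    rw [← Matrix.exp_transpose, hXT, Matrix.exp_conj _ _ isUnit_η3, η3_inv]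
  have hunit : IsUnit (NormedSpace.exp X).det :=
    (Matrix.isUnit_iff_isUnit_det _).mp (Matrix.isUnit_exp X)
  have horth : (NormedSpace.exp X)ᵀ * η3 * NormedSpace.exp X = η3 := by
    rw [hexpT, Matrix.exp_neg]
    calc η3 * (NormedSpace.exp X)⁻¹ * η3 * η3 * NormedSpace.exp X
        = η3 * ((NormedSpace.exp X)⁻¹ * NormedSpace.exp X) := by
          rw [Matrix.mul_assoc _ η3 η3, η3_mul_η3, Matrix.mul_one, Matrix.mul_assoc]
      _ = η3 := by rw [Matrix.nonsing_inv_mul _ hunit, Matrix.mul_one]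
  refine ⟨horth, ?_⟩
  -- `exp X` is a square, so its determinant `±1` is nonnegative.
  have hsq : NormedSpace.exp X =
      NormedSpace.exp ((1 / 2 : ℝ) • X) * NormedSpace.exp ((1 / 2 : ℝ) • X) := by
    rw [← Matrix.exp_add_of_commute _ _ ((Commute.refl X).smul_left _ |>.smul_right _),
      ← add_smul, add_halves, one_smul]
  have hnonneg : 0 ≤ (NormedSpace.exp X).det := by
    rw [hsq, Matrix.det_mul]; exact mul_self_nonneg _
  have hsq_det : (NormedSpace.exp X).det * (NormedSpace.exp X).det = 1 := by
    simpa [Matrix.det_mul, Matrix.det_transpose, det_η3] using congrArg Matrix.det horth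
  rcases mul_self_eq_one_iff.mp hsq_det with h | h
  · exact h
  · linarith

end Lorentz

section Pairing

theorem isSO21_Mmap (p : Fin 3 → ℝ) : IsSO21 (Mmap p) := by
  unfold IsSO21
  ext i j
  fin_cases i <;> fin_cases j <;>
    simp [Mmap, η3, Matrix.mul_apply, Fin.sum_univ_three]

theorem IsSO21.smul {X : Matrix (Fin 3) (Fin 3) ℝ} (hX : IsSO21 X) (c : ℝ) : IsSO21 (c • X) := by
  rw [IsSO21, Matrix.transpose_smul, Matrix.smul_mul, Matrix.mul_smul, ← smul_add, hX, smul_zero]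

theorem IsSO21.sub {X Y : Matrix (Fin 3) (Fin 3) ℝ} (hX : IsSO21 X) (hY : IsSO21 Y) :
    IsSO21 (X - Y) := by
  rw [IsSO21, Matrix.transpose_sub, Matrix.sub_mul, Matrix.mul_sub, sub_add_sub_comm, hX, hY,
    sub_zero]

theorem mser_Mmap (p : Fin 3 → ℝ) : mser (Mmap p) = p := by
  ext i; fin_cases i <;> simp [Mmap, mser]

theorem IsSO21.Mmap_mser {X : Matrix (Fin 3) (Fin 3) ℝ} (hX : IsSO21 X) : Mmap (mser X) = X := by
  have h (i j : Fin 3) := congrFun₂ hX i j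
  have h00 := h 0 0; have h11 := h 1 1; have h22 := h 2 2
  have h01 := h 0 1; have h02 := h 0 2; have h12 := h 1 2
  simp [η3, Matrix.mul_apply, Fin.sum_univ_three] at h00 h11 h22 h01 h02 h12
  ext i j
  fin_cases i <;> fin_cases j <;> simp [Mmap, mser] <;> linarith

theorem mser_sub (X Y : Matrix (Fin 3) (Fin 3) ℝ) : mser (X - Y) = mser X - mser Y := by
  ext i; fin_cases i <;> simp [mser, neg_add_eq_sub]

theorem mink_sub_left (p q a : Fin 3 → ℝ) : mink (p - q) a = mink p a - mink q a := by
  simp only [mink, Pi.sub_apply]; ring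

theorem mink_sub_right (p a b : Fin 3 → ℝ) : mink p (a - b) = mink p a - mink p b := by
  simp only [mink, Pi.sub_apply]; ring

theorem mink_eq_dotProduct (a b : Fin 3 → ℝ) : mink a b = a ⬝ᵥ (η3 *ᵥ b) := by
  simp [mink, η3, Matrix.mulVec_diagonal, dotProduct, Fin.sum_univ_three, ← sub_eq_add_neg]

theorem mink_mulVec_mulVec {A : Matrix (Fin 3) (Fin 3) ℝ} (hA : Aᵀ * η3 * A = η3)
    (a b : Fin 3 → ℝ) : mink (A *ᵥ a) (A *ᵥ b) = mink a b := by
  rw [mink_eq_dotProduct, mink_eq_dotProduct, Matrix.mulVec_mulVec, Matrix.dotProduct_mulVec,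
    Matrix.dotProduct_mulVec, ← Matrix.vecMul_transpose, Matrix.vecMul_vecMul, ← Matrix.mul_assoc,
    hA]

-- The cross product identity `(A p) × (A q) = cof(A) (p × q)`, written with `M`.
theorem Mmap_mulVec_mul (A : Matrix (Fin 3) (Fin 3) ℝ) (p : Fin 3 → ℝ) :
    Mmap (A *ᵥ p) * A = η3 * A.adjugateᵀ * η3 * Mmap p := by
  rw [Matrix.adjugate_fin_three]
  ext i j
  fin_cases i <;> fin_cases j <;>
    (simp [Mmap, η3, Matrix.mul_apply, Matrix.mulVec, dotProduct, Fin.sum_univ_three]; ring)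

end Pairing

namespace IsSpecialLorentz

variable {A : Matrix (Fin 3) (Fin 3) ℝ}

theorem conj_Mmap (h : IsSpecialLorentz A) (p : Fin 3 → ℝ) :
    A * Mmap p * A⁻¹ = Mmap (A *ᵥ p) := by
  have hadj : A.adjugate = A⁻¹ := by rw [Matrix.inv_def, h.2, Ring.inverse_one, one_smul]
  have hcof : η3 * A.adjugateᵀ * η3 = A := by
    rw [hadj, h.inv_eq, Matrix.transpose_mul, Matrix.transpose_mul, Matrix.transpose_transpose,
      η3_transpose]
    calc η3 * (η3 * (A * η3)) * η3 = (η3 * η3) * A * (η3 * η3) := by noncomm_ring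
      _ = A := by rw [η3_mul_η3, Matrix.one_mul, Matrix.mul_one]
  calc A * Mmap p * A⁻¹ = Mmap (A *ᵥ p) * A * A⁻¹ := by rw [Mmap_mulVec_mul, hcof]
    _ = Mmap (A *ᵥ p) := by
      rw [Matrix.mul_assoc, Matrix.mul_nonsing_inv _ h.isUnit_det, Matrix.mul_one]

theorem mink_mser_conj (h : IsSpecialLorentz A) {X : Matrix (Fin 3) (Fin 3) ℝ} (hX : IsSO21 X)
    (q : Fin 3 → ℝ) : mink (mser (A * X * A⁻¹)) q = mink (mser X) (A⁻¹ *ᵥ q) := by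
  conv_lhs => rw [← hX.Mmap_mser, h.conj_Mmap, mser_Mmap]
  rw [← mink_mulVec_mulVec h.1 (mser X), Matrix.mulVec_mulVec,
    Matrix.mul_nonsing_inv _ h.isUnit_det, Matrix.one_mulVec]

theorem mink_mser_sub_conj (h : IsSpecialLorentz A) {X : Matrix (Fin 3) (Fin 3) ℝ}
    (hX : IsSO21 X) (q : Fin 3 → ℝ) :
    mink (mser (X - A * X * A⁻¹)) q = mink (mser X) ((1 - A⁻¹) *ᵥ q) := by
  rw [mser_sub, mink_sub_left, h.mink_mser_conj hX, Matrix.sub_mulVec, Matrix.one_mulVec,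
    mink_sub_right]

theorem conj {c : Matrix (Fin 3) (Fin 3) ℝ} (h : IsSpecialLorentz A) (hc : IsSpecialLorentz c) :
    IsSpecialLorentz (A * c * A⁻¹) :=
  (h.mul hc).mul h.inv

end IsSpecialLorentz

section LorentzFamilies

variable {f : ℝ → Matrix (Fin 3) (Fin 3) ℝ} {t : ℝ}

theorem isSO21_matLogDeriv (hf : ∀ s, IsSpecialLorentz (f s)) (hd : DifferentiableAt ℝ f t) :
    IsSO21 (matLogDeriv f t) :=
  matLogDeriv_transpose_mul_add (fun s => (hf s).1) hd (hf t).isUnit_det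

theorem differentiableAt_inv_of_isSpecialLorentz (hf : ∀ s, IsSpecialLorentz (f s))
    (hd : DifferentiableAt ℝ f t) : DifferentiableAt ℝ (fun s => (f s)⁻¹) t := by
  have hT : DifferentiableAt ℝ (fun s => (f s)ᵀ) t :=
    hd.hasDerivAt.matrix_transpose.differentiableAt
  simp only [fun s => (hf s).inv_eq]
  exact ((differentiableAt_const η3).matrix_mul hT).matrix_mul (differentiableAt_const η3)

theorem differentiableAt_conj_of_isSpecialLorentz (hf : ∀ s, IsSpecialLorentz (f s))
    (hd : DifferentiableAt ℝ f t) (c : Matrix (Fin 3) (Fin 3) ℝ) :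
    DifferentiableAt ℝ (fun s => f s * c * (f s)⁻¹) t :=
  (hd.matrix_mul (differentiableAt_const c)).matrix_mul
    (differentiableAt_inv_of_isSpecialLorentz hf hd)

end LorentzFamilies

theorem isSpecialLorentz_ordProd {u : ℕ → ℝ → Matrix (Fin 3) (Fin 3) ℝ} {k : ℕ}
    (hu : ∀ i < k, ∀ t, IsSpecialLorentz (u i t)) (t : ℝ) : IsSpecialLorentz (ordProd u k t) := by
  induction k with
  | zero => exact IsSpecialLorentz.one
  | succ k ih =>
    exact (hu k k.lt_succ_self t).mul (ih fun i hi => hu i (hi.trans k.lt_succ_self))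

theorem differentiable_ordProd {n : ℕ} {u : ℕ → ℝ → Matrix (Fin n) (Fin n) ℝ} {k : ℕ}
    (hu : ∀ i < k, Differentiable ℝ (u i)) : Differentiable ℝ (ordProd u k) := by
  induction k with
  | zero => exact differentiable_const _
  | succ k ih =>
    exact fun t => (hu k k.lt_succ_self t).matrix_mul
      (ih (fun i hi => hu i (hi.trans k.lt_succ_self)) t)

theorem mink_mser_matLogDeriv_sub_eq {U v u : ℝ → Matrix (Fin 3) (Fin 3) ℝ}
    {c : Matrix (Fin 3) (Fin 3) ℝ} {t : ℝ} (hU : ∀ s, IsSpecialLorentz (U s))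
    (hUd : DifferentiableAt ℝ U t) (hv : ∀ s, IsSpecialLorentz (v s))
    (hvd : DifferentiableAt ℝ v t) (hc : IsSpecialLorentz c) (hu : ∀ s, u s = v s * c * (v s)⁻¹)
    (q : Fin 3 → ℝ) :
    mink (mser (matLogDeriv U t - matLogDeriv v t)) ((1 - (u t)⁻¹) *ᵥ q) =
      mink (mser (matLogDeriv U t - matLogDeriv (fun s => u s * U s) t)) q := by
  obtain rfl : u = fun s => v s * c * (v s)⁻¹ := funext hu
  have hud := differentiableAt_conj_of_isSpecialLorentz hv hvd c
  have hX : IsSO21 (matLogDeriv U t - matLogDeriv v t) :=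
    (isSO21_matLogDeriv hU hUd).sub (isSO21_matLogDeriv hv hvd)
  rw [← ((hv t).conj hc).mink_mser_sub_conj hX, matLogDeriv_mul hud hUd (hU t).isUnit_det,
    matLogDeriv_conj_const hvd (differentiableAt_inv_of_isSpecialLorentz hv hvd)
      (fun s => (hv s).isUnit_det) hc.isUnit_det]
  congr 2
  noncomm_ring

theorem statement0_general (n : ℕ) (μ : ℕ → ℝ)
    (v : ℕ → ℝ → Matrix (Fin 3) (Fin 3) ℝ) (x : ℕ → ℝ → (Fin 3 → ℝ))
    (hv : ∀ i < n, Differentiable ℝ (v i))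
    (hvSO : ∀ i < n, ∀ ε, IsSOplus (v i ε))
    (u : ℕ → ℝ → Matrix (Fin 3) (Fin 3) ℝ)
    (hu : ∀ i ε, u i ε = v i ε * NormedSpace.exp (-(μ i) • Mmap (e3 0)) * (v i ε)⁻¹)
    (j : ℕ → ℝ → (Fin 3 → ℝ))
    (hj : ∀ i ε, j i ε = (1 - (u i ε)⁻¹) *ᵥ x i ε)
    (ε : ℝ) :
    ∑ i ∈ Finset.range n,
      mink (mser (deriv (ordProd u i) ε * (ordProd u i ε)⁻¹
        - deriv (v i) ε * (v i ε)⁻¹)) (j i ε)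
    = ∑ i ∈ Finset.range n,
      mink (mser (deriv (ordProd u i) ε * (ordProd u i ε)⁻¹
        - deriv (ordProd u (i + 1)) ε * (ordProd u (i + 1) ε)⁻¹)) (x i ε) := by
  have hvL : ∀ i < n, ∀ t, IsSpecialLorentz (v i t) := fun i hi t =>
    ⟨(hvSO i hi t).1, (hvSO i hi t).2.1⟩
  have hcL : ∀ i, IsSpecialLorentz (NormedSpace.exp (-(μ i) • Mmap (e3 0))) := fun i =>
    ((isSO21_Mmap _).smul _).isSpecialLorentz_exp
  have huL : ∀ i < n, ∀ t, IsSpecialLorentz (u i t) := fun i hi t => by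
    rw [hu i t]; exact (hvL i hi t).conj (hcL i)
  have hud : ∀ i < n, Differentiable ℝ (u i) := fun i hi t => by
    rw [funext (hu i)]; exact differentiableAt_conj_of_isSpecialLorentz (hvL i hi) (hv i hi t) _
  refine Finset.sum_congr rfl fun i hi => ?_
  replace hi := Finset.mem_range.mp hi
  rw [hj]
  exact mink_mser_matLogDeriv_sub_eq (isSpecialLorentz_ordProd fun k hk => huL k (hk.trans hi))
    (differentiable_ordProd (fun k hk => hud k (hk.trans hi)) ε) (hvL i hi) (hv i hi ε) (hcL i)
    (hu i) (x i ε)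

/-- Lemma 6.1, part 1: for genus 0 and n spinless particles the one-form Θ
takes the form (6.4) in the variables ũ_{Mᵢ}, x̃_{Mᵢ}. -/
theorem statement0 (n : ℕ) (hn : 1 ≤ n) (μ : ℕ → ℝ)
    (v : ℕ → ℝ → Matrix (Fin 3) (Fin 3) ℝ) (x : ℕ → ℝ → (Fin 3 → ℝ))
    (hv : ∀ i < n, Differentiable ℝ (v i))
    (hvSO : ∀ i < n, ∀ ε, IsSOplus (v i ε))
    (hx : ∀ i < n, Differentiable ℝ (x i))
    (u : ℕ → ℝ → Matrix (Fin 3) (Fin 3) ℝ)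
    (hu : ∀ i ε, u i ε = v i ε * NormedSpace.exp (-(μ i) • Mmap (e3 0)) * (v i ε)⁻¹)
    (j : ℕ → ℝ → (Fin 3 → ℝ))
    (hj : ∀ i ε, j i ε = (1 - (u i ε)⁻¹) *ᵥ x i ε)
    (ε : ℝ) :
    ∑ i ∈ Finset.range n,
      mink (mser (deriv (ordProd u i) ε * (ordProd u i ε)⁻¹
        - deriv (v i) ε * (v i ε)⁻¹)) (j i ε)
    = ∑ i ∈ Finset.range n,
      mink (mser (deriv (ordProd u i) ε * (ordProd u i ε)⁻¹
        - deriv (ordProd u (i + 1)) ε * (ordProd u (i + 1) ε)⁻¹)) (x i ε) :=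
  statement0_general n μ v x hv hvSO u hu j hj ε
end
end

section
/- Let n ≥ 1, let ũ₁,…,ũₙ ∈ SO⁺(2,1) and x̃₁,…,x̃ₙ ∈ ℝ³, and set j̃ᵢ = (1 − ũᵢ⁻¹)x̃ᵢ and M̃ᵢ = [[ũᵢ, −ũᵢ j̃ᵢ],[0,1]] ∈ ISO⁺(2,1). With gᵢ = ũ₁⁻¹ũ₂⁻¹···ũᵢ⁻¹ (g₀ = 1) and zᵢ = x̃ᵢ₊₁ − x̃ᵢ, the ordered product satisfies M̃ₙ·M̃ₙ₋₁···M̃₁ = [[ U, −U·j̃_{Kₙ} ],[0,1]] with U = ũₙ·gₙ₋₁⁻¹ and j̃_{Kₙ} = (1 − gₙ₋₁ũₙ⁻¹)x̃ₙ − Σᵢ₌₁^{n−1} (1 − gᵢ)zᵢ. (Equations (6.10)–(6.11): the total holonomy of n spinless particles on a disc, expressed in the variables gᵢ, zᵢ.) -/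
open Matrix

noncomputable section

attribute [local instance] Matrix.normedAddCommGroup Matrix.normedSpace

/-- Ordered product of constant matrices: M_{k-1}⋯M_0 (with empty product = 1). -/
def ordProdC {n : ℕ} (u : ℕ → Matrix (Fin n) (Fin n) ℝ) : ℕ → Matrix (Fin n) (Fin n) ℝ
  | 0 => 1
  | k + 1 => u k * ordProdC u k


lemma pmat_mul (v w : Matrix (Fin 3) (Fin 3) ℝ) (a b : Fin 3 → ℝ) :
    pmat v a * pmat w b = pmat (v * w) (v *ᵥ b + a) := by
  ext i j
  fin_cases i <;> fin_cases j <;>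
    simp (config := { decide := true }) [pmat, Matrix.mul_apply, Fin.sum_univ_four,
      Matrix.mulVec, dotProduct, Fin.sum_univ_three]

lemma mulVec_sum' {n : ℕ} (A : Matrix (Fin n) (Fin n) ℝ) (s : Finset ℕ) (f : ℕ → Fin n → ℝ) :
    A *ᵥ (∑ i ∈ s, f i) = ∑ i ∈ s, A *ᵥ f i := by
  simp only [← Matrix.mulVecLin_apply]
  exact map_sum A.mulVecLin f s

lemma pmat_one : pmat 1 (0 : Fin 3 → ℝ) = 1 := by
  ext i j
  fin_cases i <;> fin_cases j <;> simp (config := { decide := true }) [pmat, Matrix.one_apply]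

/-- equations (6.10)–(6.11): the total holonomy of n spinless particles
on a disc, expressed in the variables gᵢ, zᵢ. -/
theorem statement5 (n : ℕ) (hn : 1 ≤ n)
    (u : ℕ → Matrix (Fin 3) (Fin 3) ℝ) (x : ℕ → (Fin 3 → ℝ))
    (huSO : ∀ i < n, IsSOplus (u i))
    (j : ℕ → (Fin 3 → ℝ)) (hj : ∀ i, j i = (1 - (u i)⁻¹) *ᵥ x i)
    (Mt : ℕ → Matrix (Fin 4) (Fin 4) ℝ)
    (hM : ∀ i, Mt i = pmat (u i) (-(u i *ᵥ j i)))
    (g : ℕ → Matrix (Fin 3) (Fin 3) ℝ) (hg : ∀ i, g i = (ordProdC u i)⁻¹)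
    (z : ℕ → (Fin 3 → ℝ)) (hz : ∀ i, z i = x (i + 1) - x i) :
    ordProdC Mt n
    = pmat (u (n - 1) * (g (n - 1))⁻¹)
        (-((u (n - 1) * (g (n - 1))⁻¹) *ᵥ
          ((1 - g (n - 1) * (u (n - 1))⁻¹) *ᵥ x (n - 1)
            - ∑ i ∈ Finset.range (n - 1), (1 - g (i + 1)) *ᵥ z i))) := by

  obtain ⟨m, rfl⟩ : ∃ m, n = m + 1 := ⟨n - 1, (Nat.succ_pred_eq_of_pos hn).symm⟩
  simp only [Nat.add_sub_cancel]
  set A := ordProdC u with hAdef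
  have hu : ∀ i ≤ m, IsUnit (u i) := by
    intro i hi
    have hd := (huSO i (Nat.lt_succ_of_le hi)).2.1
    exact (Matrix.isUnit_iff_isUnit_det _).2 (by simp [hd])
  have hAunit : ∀ k ≤ m + 1, IsUnit (A k) := by
    intro k
    induction k with
    | zero => intro _; simpa [hAdef, ordProdC] using isUnit_one
    | succ k ih =>
      intro h
      have h1 := hu k (Nat.lt_succ_iff.mp h)
      have h2 := ih (Nat.le_of_succ_le h)
      simpa [hAdef, ordProdC] using h1.mul h2
  have huinv : ∀ i ≤ m, u i * (u i)⁻¹ = 1 := fun i hi =>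
    Matrix.mul_nonsing_inv _ ((Matrix.isUnit_iff_isUnit_det _).1 (hu i hi))
  have hAinv : ∀ k ≤ m + 1, A k * (A k)⁻¹ = 1 := fun k hk =>
    Matrix.mul_nonsing_inv _ ((Matrix.isUnit_iff_isUnit_det _).1 (hAunit k hk))
  have hMt : ∀ i ≤ m, Mt i = pmat (u i) (x i - u i *ᵥ x i) := by
    intro i hi
    rw [hM, hj]
    congr 1
    rw [Matrix.mulVec_mulVec, Matrix.mul_sub, Matrix.mul_one, huinv i hi,
      Matrix.sub_mulVec, Matrix.one_mulVec, neg_sub]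
  have key : ∀ k, k + 1 ≤ m + 1 →
      ordProdC Mt (k + 1) = pmat (A (k + 1))
        (x k - A (k + 1) *ᵥ x 0
          - ∑ i ∈ Finset.range k, A (k + 1) *ᵥ ((A (i + 1))⁻¹ *ᵥ z i)) := by
    intro k
    induction k with
    | zero =>
      intro _
      show Mt 0 * ordProdC Mt 0 = _
      rw [hMt 0 (Nat.zero_le m)]
      show pmat (u 0) (x 0 - u 0 *ᵥ x 0) * 1 = _
      have hA1 : A 1 = u 0 := by simp [hAdef, ordProdC]
      rw [mul_one, hA1]
      simp
    | succ k ih =>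
      intro h
      have hk1 : k + 1 ≤ m + 1 := Nat.le_of_succ_le h
      show Mt (k + 1) * ordProdC Mt (k + 1) = _
      rw [ih hk1, hMt (k + 1) (Nat.lt_succ_iff.mp h), pmat_mul]
      have hA2 : A (k + 1 + 1) = u (k + 1) * A (k + 1) := by simp [hAdef, ordProdC]
      rw [← hA2]
      refine congrArg _ ?_
      have hc := hAinv (k + 1) hk1
      simp only [Finset.sum_range_succ, Matrix.mulVec_sub, mulVec_sum',
        Matrix.mulVec_mulVec, hA2, mul_assoc, hc, mul_one, hz, Finset.sum_sub_distrib]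
      abel
  have hfin := key m (le_refl _)
  rw [hfin]
  have hgm : (g m)⁻¹ = A m := by
    rw [hg, Matrix.nonsing_inv_nonsing_inv _
      ((Matrix.isUnit_iff_isUnit_det _).1 (hAunit m (Nat.le_succ m)))]
  have hA2 : A (m + 1) = u m * A m := by simp [hAdef, ordProdC]
  have hrot : u m * (g m)⁻¹ = A (m + 1) := by rw [hgm, hA2]
  rw [hrot]
  refine congrArg _ ?_
  have hinvrev : g m * (u m)⁻¹ = (A (m + 1))⁻¹ := by
    rw [hg, hA2, Matrix.mul_inv_rev]
  rw [hinvrev]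
  have hAi : A (m + 1) * (A (m + 1))⁻¹ = 1 := hAinv (m + 1) (le_refl _)
  have tel : ∑ i ∈ Finset.range m, z i = x m - x 0 := by
    simp only [hz]; exact Finset.sum_range_sub x m
  have hS : A (m + 1) *ᵥ (∑ i ∈ Finset.range m, (1 - g (i + 1)) *ᵥ z i)
      = A (m + 1) *ᵥ x m - A (m + 1) *ᵥ x 0
        - ∑ i ∈ Finset.range m, A (m + 1) *ᵥ ((A (i + 1))⁻¹ *ᵥ z i) := by
    rw [mulVec_sum']
    have : ∀ i ∈ Finset.range m,
        A (m + 1) *ᵥ ((1 - g (i + 1)) *ᵥ z i)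
          = A (m + 1) *ᵥ z i - A (m + 1) *ᵥ ((A (i + 1))⁻¹ *ᵥ z i) := by
      intro i _
      rw [hg, Matrix.sub_mulVec, Matrix.one_mulVec, Matrix.mulVec_sub]
    rw [Finset.sum_congr rfl this, Finset.sum_sub_distrib, ← mulVec_sum', tel,
      Matrix.mulVec_sub]
  rw [Matrix.mulVec_sub, hS, Matrix.mulVec_mulVec, Matrix.mul_sub, mul_one, hAi,
    Matrix.sub_mulVec, Matrix.one_mulVec]
  abel
end
end

section
/- Let 0 ≤ μ < 2π, s ∈ ℝ, α = 1 − μ/(2π). Define V(φ) = exp( (μφ/(2π))·M(e₀) ) ∈ SO⁺(2,1) and X(t,r,φ) = ( t + sφ/(2π), (r/α)cos(αφ), (r/α)sin(αφ) ) ∈ ℝ³. Then for all t ∈ ℝ, r > 0, φ ∈ ℝ: V(φ)⁻¹·(∂X/∂t) = (1, 0, 0); V(φ)⁻¹·(∂X/∂r) = (0, cos φ/α, sin φ/α); V(φ)⁻¹·(∂X/∂φ) = (s/(2π), −r sin φ, r cos φ); and V(φ)⁻¹·(dV/dφ) = (μ/(2π))·M(e₀). (The trivialising function Γ_p⁻¹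 = (V, X) of the spinning-cone gauge field reproduces exactly the dreibein one-forms e⁰ = dt + (s/2π)dφ, e¹ = (cos φ/α)dr − r sin φ dφ, e² = (sin φ/α)dr + r cos φ dφ and spin connection ω⁰ = (μ/2π)dφ, ω¹ = ω² = 0 of the spinning cone, via e^aP_a = Ad(V⁻¹)dX and ω = V⁻¹dV.) -/
/-!
Since `M(e₀)³ = -M(e₀)`, both `θ ↦ exp (θ M(e₀))` and the Rodrigues expression
`1 + sin θ M(e₀) + (1 - cos θ) M(e₀)²` solve `f' = M(e₀) f`, `f 0 = 1`, so they agree: `V φ` is the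
rotation `rot (μφ/2π)` of the `e₁e₂`-plane. Applying `V(φ)⁻¹ = rot (-μφ/2π)` to a vector whose
spatial part has polar angle `β` raises the angle to `β + μφ/2π`; the spatial parts of `∂X/∂r` and
`∂X/∂φ` have polar angles `αφ` and `αφ + π/2`, and `αφ + μφ/2π = φ`. Finally `rot` is a
one-parameter group with generator `M(e₀)`, so `V⁻¹ V' = (μ/2π) M(e₀)`.
-/

open Matrix

noncomputable section

attribute [local instance] Matrix.normedAddCommGroup Matrix.normedSpace

open Real

theorem hasDerivAt_add_sin_smul_add_one_sub_cos_smul {E : Type*} [NormedAddCommGroup E]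
    [NormedSpace ℝ E] (a b c : E) (θ : ℝ) :
    HasDerivAt (fun θ => a + sin θ • b + (1 - cos θ) • c) (cos θ • b + sin θ • c) θ :=
  (((hasDerivAt_const θ a).add ((hasDerivAt_sin θ).smul_const b)).add
    (((hasDerivAt_const θ 1).sub (hasDerivAt_cos θ)).smul_const c)).congr_deriv (by simp)

section Rodrigues

variable {𝔸 : Type*} [NormedRing 𝔸] [NormedAlgebra ℝ 𝔸] [CompleteSpace 𝔸]

theorem eq_exp_smul_of_hasDerivAt {f : ℝ → 𝔸} {A : 𝔸} (hf : ∀ t, HasDerivAt f (A * f t) t)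
    (hf0 : f 0 = 1) (t : ℝ) : f t = NormedSpace.exp (t • A) := by
  have hderiv : ∀ u, HasDerivAt (fun u => NormedSpace.exp (u • -A) * f u) 0 u := fun u =>
    ((hasDerivAt_exp_smul_const (-A) u).mul (hf u)).congr_deriv (by noncomm_ring)
  have hconst : NormedSpace.exp (t • -A) * f t = 1 := by
    simpa [hf0] using
      is_const_of_deriv_eq_zero (fun u => (hderiv u).differentiableAt)
        (fun u => (hderiv u).deriv) t 0
  have hinv : NormedSpace.exp (t • A) * NormedSpace.exp (t • -A) = 1 := by
    rw [smul_neg, ← NormedSpace.exp_add_of_commute_of_mem_ball (𝕂 := ℝ)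
      (((Commute.refl A).smul_left t).smul_right t).neg_right
      (by simp [NormedSpace.expSeries_radius_eq_top])
      (by simp [NormedSpace.expSeries_radius_eq_top]),
      add_neg_cancel, NormedSpace.exp_zero]
  calc f t = NormedSpace.exp (t • A) * (NormedSpace.exp (t • -A) * f t) := by
        rw [← mul_assoc, hinv, one_mul]
    _ = NormedSpace.exp (t • A) := by rw [hconst, mul_one]

theorem exp_smul_eq_of_pow_three_eq_neg {A : 𝔸} (hA : A ^ 3 = -A) (θ : ℝ) :
    NormedSpace.exp (θ • A) = 1 + sin θ • A + (1 - cos θ) • A ^ 2 := by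
  have hA' : A * A ^ 2 = -A := by rw [← pow_succ', hA]
  refine (eq_exp_smul_of_hasDerivAt
    (f := fun θ => 1 + sin θ • A + (1 - cos θ) • A ^ 2) (fun θ => ?_) (by simp) θ).symm
  refine (hasDerivAt_add_sin_smul_add_one_sub_cos_smul (1 : 𝔸) A (A ^ 2) θ).congr_deriv ?_
  simp only [mul_add, mul_one, mul_smul_comm, hA', ← sq]
  module

end Rodrigues

theorem Mmap_pow_three (p : Fin 3 → ℝ) : Mmap p ^ 3 = -mink p p • Mmap p := by
  rw [pow_succ, sq]
  ext i j
  fin_cases i <;> fin_cases j <;> simp [Mmap, mink, Matrix.mul_apply, Fin.sum_univ_three] <;> ring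

def rot (θ : ℝ) : Matrix (Fin 3) (Fin 3) ℝ :=
  !![1, 0, 0; 0, cos θ, sin θ; 0, -sin θ, cos θ]

theorem rot_zero : rot 0 = 1 := by
  simp [rot, Matrix.one_fin_three]

theorem rot_eq_one_add_sin_smul_add_one_sub_cos_smul (θ : ℝ) :
    rot θ = 1 + sin θ • Mmap (e3 0) + (1 - cos θ) • Mmap (e3 0) ^ 2 := by
  rw [sq]
  ext i j
  fin_cases i <;> fin_cases j <;> simp [rot, Mmap, e3]

section

-- `NormedSpace.exp` depends only on the topology, which all matrix norms induce; the operator norm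
-- is the one that makes matrices a Banach algebra.
open scoped Matrix.Norms.Operator

theorem exp_smul_Mmap_e3_zero (θ : ℝ) : NormedSpace.exp (θ • Mmap (e3 0)) = rot θ := by
  rw [rot_eq_one_add_sin_smul_add_one_sub_cos_smul]
  exact exp_smul_eq_of_pow_three_eq_neg (by simp [Mmap_pow_three, mink, e3]) θ

theorem hasDerivAt_rot (θ : ℝ) : HasDerivAt rot (rot θ * Mmap (e3 0)) θ := by
  -- restated so that `HasDerivAt` elaborates with the usual matrix instances
  have h : HasDerivAt (fun θ : ℝ => NormedSpace.exp (θ • Mmap (e3 0)))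
      (NormedSpace.exp (θ • Mmap (e3 0)) * Mmap (e3 0)) θ :=
    hasDerivAt_exp_smul_const _ θ
  simpa only [exp_smul_Mmap_e3_zero] using h

end

theorem rot_add (θ ψ : ℝ) : rot (θ + ψ) = rot θ * rot ψ := by
  ext i j
  fin_cases i <;> fin_cases j <;>
    simp [rot, Matrix.mul_apply, Fin.sum_univ_three, cos_add, sin_add] <;> ring

theorem inv_rot (θ : ℝ) : (rot θ)⁻¹ = rot (-θ) :=
  Matrix.inv_eq_left_inv (by rw [← rot_add, neg_add_cancel, rot_zero])

theorem rot_neg_mulVec_polar (ψ a ρ β : ℝ) :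
    rot (-ψ) *ᵥ ![a, ρ * cos β, ρ * sin β] = ![a, ρ * cos (β + ψ), ρ * sin (β + ψ)] := by
  ext i
  fin_cases i <;>
    simp [rot, Matrix.mulVec, dotProduct, Fin.sum_univ_three, cos_add, sin_add] <;> ring

theorem HasDerivAt.vec3 {𝕜 F : Type*} [NontriviallyNormedField 𝕜] [NormedAddCommGroup F]
    [NormedSpace 𝕜 F] {f g h : 𝕜 → F} {f' g' h' : F} {x : 𝕜} (hf : HasDerivAt f f' x)
    (hg : HasDerivAt g g' x) (hh : HasDerivAt h h' x) :
    HasDerivAt (fun x => ![f x, g x, h x]) ![f', g', h'] x :=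
  hasDerivAt_pi.2 fun i => by fin_cases i <;> assumption

theorem hasDerivAt_div_mul_cos_mul (r : ℝ) {α : ℝ} (hα : α ≠ 0) (φ : ℝ) :
    HasDerivAt (fun φ => r / α * cos (α * φ)) (-(r * sin (α * φ))) φ :=
  (((hasDerivAt_id' φ).const_mul α).cos.const_mul (r / α)).congr_deriv (by field_simp)

theorem hasDerivAt_div_mul_sin_mul (r : ℝ) {α : ℝ} (hα : α ≠ 0) (φ : ℝ) :
    HasDerivAt (fun φ => r / α * sin (α * φ)) (r * cos (α * φ)) φ :=
  (((hasDerivAt_id' φ).const_mul α).sin.const_mul (r / α)).congr_deriv (by field_simp)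

def spinningConeEmbedding (s α t r φ : ℝ) : Fin 3 → ℝ :=
  ![t + s * φ / (2 * π), r / α * cos (α * φ), r / α * sin (α * φ)]

theorem hasDerivAt_spinningConeEmbedding_t (s α t r φ : ℝ) :
    HasDerivAt (fun t => spinningConeEmbedding s α t r φ) ![1, 0, 0] t :=
  ((hasDerivAt_id' t).add_const _).vec3 (hasDerivAt_const _ _) (hasDerivAt_const _ _)

theorem hasDerivAt_spinningConeEmbedding_r (s α t r φ : ℝ) :
    HasDerivAt (fun r => spinningConeEmbedding s α t r φ)
      ![0, 1 / α * cos (α * φ), 1 / α * sin (α * φ)] r :=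
  (hasDerivAt_const _ _).vec3 (((hasDerivAt_id' r).div_const α).mul_const _)
    (((hasDerivAt_id' r).div_const α).mul_const _)

theorem hasDerivAt_spinningConeEmbedding_φ (s : ℝ) {α : ℝ} (hα : α ≠ 0) (t r φ : ℝ) :
    HasDerivAt (fun φ => spinningConeEmbedding s α t r φ)
      ![s / (2 * π), r * cos (α * φ + π / 2), r * sin (α * φ + π / 2)] φ := by
  simp only [spinningConeEmbedding, cos_add_pi_div_two, sin_add_pi_div_two, mul_neg]
  exact (((hasDerivAt_const_mul s).div_const _).const_add t).vec3
    (hasDerivAt_div_mul_cos_mul r hα φ) (hasDerivAt_div_mul_sin_mul r hα φ)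

theorem statement8_general (μ s : ℝ) (hμ : μ < 2 * Real.pi)
    (α : ℝ) (hα : α = 1 - μ / (2 * Real.pi))
    (V : ℝ → Matrix (Fin 3) (Fin 3) ℝ)
    (hV : ∀ φ, V φ = NormedSpace.exp ((μ * φ / (2 * Real.pi)) • Mmap (e3 0)))
    (X : ℝ → ℝ → ℝ → (Fin 3 → ℝ))
    (hX : ∀ t r φ, X t r φ = ![t + s * φ / (2 * Real.pi),
      (r / α) * Real.cos (α * φ), (r / α) * Real.sin (α * φ)])
    (t r φ : ℝ) :
    (V φ)⁻¹ *ᵥ deriv (fun t' => X t' r φ) t = ![1, 0, 0]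
    ∧ (V φ)⁻¹ *ᵥ deriv (fun r' => X t r' φ) r = ![0, Real.cos φ / α, Real.sin φ / α]
    ∧ (V φ)⁻¹ *ᵥ deriv (fun φ' => X t r φ') φ
        = ![s / (2 * Real.pi), -(r * Real.sin φ), r * Real.cos φ]
    ∧ (V φ)⁻¹ * deriv V φ = (μ / (2 * Real.pi)) • Mmap (e3 0) := by
  have hα0 : α ≠ 0 := hα ▸ (sub_pos.2 ((div_lt_one (by positivity)).2 hμ)).ne'
  obtain rfl : X = spinningConeEmbedding s α := funext₃ hX
  have hV_rot : V = fun φ => rot (μ / (2 * π) * φ) :=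
    funext fun φ => by rw [hV, exp_smul_Mmap_e3_zero, mul_div_right_comm]
  have hV_inv : (V φ)⁻¹ = rot (-(μ / (2 * π) * φ)) := by rw [hV_rot, inv_rot]
  have hV' : HasDerivAt V ((μ / (2 * π)) • (rot (μ / (2 * π) * φ) * Mmap (e3 0))) φ :=
    hV_rot ▸ (hasDerivAt_rot _).scomp φ (hasDerivAt_const_mul _)
  have hangle : α * φ + μ / (2 * π) * φ = φ := by rw [hα]; ring
  refine ⟨?_, ?_, ?_, ?_⟩
  · rw [(hasDerivAt_spinningConeEmbedding_t s α t r φ).deriv, hV_inv]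
    simpa using rot_neg_mulVec_polar (μ / (2 * π) * φ) 1 0 0
  · rw [(hasDerivAt_spinningConeEmbedding_r s α t r φ).deriv, hV_inv, rot_neg_mulVec_polar, hangle]
    simp [div_eq_inv_mul]
  · rw [(hasDerivAt_spinningConeEmbedding_φ s hα0 t r φ).deriv, hV_inv, rot_neg_mulVec_polar,
      add_right_comm, hangle]
    simp [cos_add_pi_div_two, sin_add_pi_div_two]
  · rw [show deriv V φ = _ from hV'.deriv, hV_inv, mul_smul_comm, ← mul_assoc, ← rot_add,
      neg_add_cancel, rot_zero, one_mul]

/-- the trivialising function Γ_p⁻¹ = (V, X) of the spinning-cone gauge field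
reproduces the dreibein and spin connection of the spinning cone, via e^aP_a = Ad(V⁻¹)dX
and ω = V⁻¹dV. -/
theorem statement8 (μ s : ℝ) (hμ0 : 0 ≤ μ) (hμ : μ < 2 * Real.pi)
    (α : ℝ) (hα : α = 1 - μ / (2 * Real.pi))
    (V : ℝ → Matrix (Fin 3) (Fin 3) ℝ)
    (hV : ∀ φ, V φ = NormedSpace.exp ((μ * φ / (2 * Real.pi)) • Mmap (e3 0)))
    (X : ℝ → ℝ → ℝ → (Fin 3 → ℝ))
    (hX : ∀ t r φ, X t r φ = ![t + s * φ / (2 * Real.pi),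
      (r / α) * Real.cos (α * φ), (r / α) * Real.sin (α * φ)])
    (t r φ : ℝ) (hr : 0 < r) :
    (V φ)⁻¹ *ᵥ deriv (fun t' => X t' r φ) t = ![1, 0, 0]
    ∧ (V φ)⁻¹ *ᵥ deriv (fun r' => X t r' φ) r = ![0, Real.cos φ / α, Real.sin φ / α]
    ∧ (V φ)⁻¹ *ᵥ deriv (fun φ' => X t r φ') φ
        = ![s / (2 * Real.pi), -(r * Real.sin φ), r * Real.cos φ]
    ∧ (V φ)⁻¹ * deriv V φ = (μ / (2 * Real.pi)) • Mmap (e3 0) :=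
  statement8_general μ s hμ α hα V hV X hX t r φ
end
end

section
/- Let μ, s ∈ ℝ be constants, let ŵ ∈ ISO⁺(2,1) be a fixed element, let t₀, φ₀ : ℝ → ℝ be differentiable, and set w(x⁰) = ŵ·exp( (μφ₀(x⁰)/(2π))Ĵ₀ + (t₀(x⁰) + sφ₀(x⁰)/(2π))P̂₀ ). Then for every x⁰: −⟨ μĴ₀ + sP̂₀, w(x⁰)⁻¹w′(x⁰) ⟩ = −μ·t₀′(x⁰) − (μs/(2π))·φ₀′(x⁰) − (d/dx⁰)( μs·φ₀(x⁰)/(2π) ). (Equation (4.27): in a centre of mass frame, where w is restricted to the abelian subgroup T_𝔠, the kinetic term of the boundary variables reduces, up to a total time derivative, to −μ∂₀t₀ − (μs/2π)∂₀φ₀, yielding the centre of mass action (4.28).) -/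
open Matrix

noncomputable section

attribute [local instance] Matrix.normedAddCommGroup Matrix.normedSpace

/-!
Ĵ₀ and P̂₀ commute (both products vanish), so w = ŵ · exp A with A(x⁰) = a(x⁰)Ĵ₀ + b(x⁰)P̂₀
moving in an abelian subalgebra, and the Maurer–Cartan form w⁻¹w′ is just A′ = a′Ĵ₀ + b′P̂₀.
Pairing with μĴ₀ + sP̂₀ gives μb′ + sa′ = μt₀′ + 2 · μsφ₀′/(2π), and one of the two copies of
μsφ₀′/(2π) is the total derivative.
-/

open NormedSpace

theorem hasDerivAt_exp_smul_add_smul {𝔸 : Type*} [NormedRing 𝔸] [NormedAlgebra ℝ 𝔸]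
    [CompleteSpace 𝔸] {J P : 𝔸} (hJP : Commute J P) {a b : ℝ → ℝ} {a' b' x : ℝ}
    (ha : HasDerivAt a a' x) (hb : HasDerivAt b b' x) :
    HasDerivAt (fun y => exp (a y • J + b y • P))
      (exp (a x • J + b x • P) * (a' • J + b' • P)) x := by
  have hsplit : ∀ y, exp (a y • J + b y • P) = exp (a y • J) * exp (b y • P) := fun y =>
    exp_add_of_commute_of_mem_ball (𝕂 := ℝ) ((hJP.smul_left _).smul_right _)
      ((expSeries_radius_eq_top ℝ 𝔸).symm ▸ edist_lt_top _ _)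
      ((expSeries_radius_eq_top ℝ 𝔸).symm ▸ edist_lt_top _ _)
  have hJ := (hasDerivAt_exp_smul_const J (a x)).scomp x ha
  have hP := (hasDerivAt_exp_smul_const P (b x)).scomp x hb
  convert hJ.mul hP using 1
  · exact funext hsplit
  have hJe : Commute J (exp (b x • P)) := (hJP.smul_right _).exp_right
  rw [hsplit]
  simp only [Function.comp_apply, mul_add, smul_mul_assoc, mul_smul_comm, mul_assoc, hJe.eq]

theorem Matrix.inv_mul_deriv_mul_exp_smul_add_smul {n : Type*} [Fintype n] [DecidableEq n]
    {g J P : Matrix n n ℝ} (hg : IsUnit g.det) (hJP : Commute J P) {a b : ℝ → ℝ}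
    {a' b' x : ℝ} (ha : HasDerivAt a a' x) (hb : HasDerivAt b b' x) :
    (g * exp (a x • J + b x • P))⁻¹ * deriv (fun y => g * exp (a y • J + b y • P)) x
      = a' • J + b' • P := by
  -- Differentiate for the operator norm: `HasDerivAt` only sees the topology, which is the same.
  have hderiv : HasDerivAt (fun y => g * exp (a y • J + b y • P))
      (g * exp (a x • J + b x • P) * (a' • J + b' • P)) x := by
    rw [Matrix.mul_assoc]
    exact open scoped Norms.Operator in (_root_.hasDerivAt_exp_smul_add_smul hJP ha hb).const_mul g
  have hunit : IsUnit (g * exp (a x • J + b x • P)).det := by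
    rw [det_mul]
    exact hg.mul ((Matrix.isUnit_iff_isUnit_det _).mp (Matrix.isUnit_exp _))
  rw [show deriv (fun y => g * exp (a y • J + b y • P)) x = _ from hderiv.deriv,
    Matrix.nonsing_inv_mul_cancel_left _ _ hunit]

theorem amat_mul (X Y : Matrix (Fin 3) (Fin 3) ℝ) (b c : Fin 3 → ℝ) :
    amat X b * amat Y c = amat (X * Y) (X *ᵥ c) := by
  ext i j
  fin_cases i <;> fin_cases j <;>
    simp [amat, Matrix.mul_apply, Fin.sum_univ_four, Fin.sum_univ_three, Matrix.mulVec,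
      dotProduct]

theorem amat_zero_zero : amat 0 0 = 0 := by
  ext i j
  simp [amat]

theorem Mmap_mulVec_self (p : Fin 3 → ℝ) : Mmap p *ᵥ p = 0 := by
  ext i
  fin_cases i <;> simp [Mmap, Matrix.mulVec, dotProduct, Fin.sum_univ_three, mul_comm]

theorem Phat_mul_Jhat (a b : Fin 3) : Phat a * Jhat b = 0 := by
  rw [Phat, Jhat, amat_mul, Matrix.zero_mul, Matrix.zero_mulVec, amat_zero_zero]

theorem Jhat_mul_Phat_self (a : Fin 3) : Jhat a * Phat a = 0 := by
  rw [Jhat, Phat, amat_mul, Matrix.mul_zero, Mmap_mulVec_self, amat_zero_zero]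

theorem commute_Jhat_Phat_self (a : Fin 3) : Commute (Jhat a) (Phat a) :=
  (Jhat_mul_Phat_self a).trans (Phat_mul_Jhat a a).symm

theorem pmat_eq_reindex_fromBlocks (v : Matrix (Fin 3) (Fin 3) ℝ) (x : Fin 3 → ℝ) :
    pmat v x = reindex finSumFinEquiv finSumFinEquiv
      (fromBlocks v (replicateCol (Fin 1) x) (0 : Matrix (Fin 1) (Fin 3) ℝ) 1) := by
  ext i j
  fin_cases i <;> fin_cases j <;> rfl

theorem det_pmat (v : Matrix (Fin 3) (Fin 3) ℝ) (x : Fin 3 → ℝ) : (pmat v x).det = v.det := by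
  rw [pmat_eq_reindex_fromBlocks, det_reindex_self, det_fromBlocks_zero₂₁, det_one, mul_one]

theorem IsISO.isUnit_det {g : Matrix (Fin 4) (Fin 4) ℝ} (hg : IsISO g) : IsUnit g.det := by
  obtain ⟨v, x, ⟨-, hv, -⟩, rfl⟩ := hg
  rw [det_pmat, hv]
  exact isUnit_one

theorem pairIso_smul_Jhat_zero_add_smul_Phat_zero (μ s α β : ℝ) :
    pairIso (μ • Jhat 0 + s • Phat 0) (α • Jhat 0 + β • Phat 0) = μ * β + s * α := by
  simp [pairIso, mink, Jhat, Phat, amat, Mmap, e3, mul_comm]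

/-- equation (4.27): in a centre of mass frame the kinetic term of the
boundary variables reduces, up to a total time derivative, to −μ∂₀t₀ − (μs/2π)∂₀φ₀. -/
theorem statement18 (μ s : ℝ) (what : Matrix (Fin 4) (Fin 4) ℝ) (hwhat : IsISO what)
    (t₀ φ₀ : ℝ → ℝ) (ht₀ : Differentiable ℝ t₀) (hφ₀ : Differentiable ℝ φ₀)
    (w : ℝ → Matrix (Fin 4) (Fin 4) ℝ)
    (hw : ∀ x, w x = what * NormedSpace.exp
      ((μ * φ₀ x / (2 * Real.pi)) • Jhat 0 + (t₀ x + s * φ₀ x / (2 * Real.pi)) • Phat 0))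
    (x : ℝ) :
    -pairIso (μ • Jhat 0 + s • Phat 0) ((w x)⁻¹ * deriv w x)
    = -(μ * deriv t₀ x) - (μ * s / (2 * Real.pi)) * deriv φ₀ x
      - deriv (fun y => μ * s * φ₀ y / (2 * Real.pi)) x := by
  have hφ := (hφ₀ x).hasDerivAt
  have ha := (hφ.const_mul μ).div_const (2 * Real.pi)
  have hb : HasDerivAt (fun y => t₀ y + s * φ₀ y / (2 * Real.pi)) _ x :=
    (ht₀ x).hasDerivAt.add ((hφ.const_mul s).div_const (2 * Real.pi))
  rw [funext hw, Matrix.inv_mul_deriv_mul_exp_smul_add_smul hwhat.isUnit_det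
    (commute_Jhat_Phat_self 0) ha hb, pairIso_smul_Jhat_zero_add_smul_Phat_zero,
    ((hφ.const_mul (μ * s)).div_const (2 * Real.pi)).deriv]
  ring
end
end
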